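/- For a commutative unital algebra A ⊆ L(H), the following are equivalent: (1) A has a rationally strictly cyclic vector and every nonzero B ∈ A is injective; (2) A is confluent, i.e., for every pair of nonzero vectors h₁, h₂ ∈ H there exist injective B₁, B₂ ∈ A with B₁h₁ = B₂h₂. Moreover, if these hold, every nonzero vector of H is rationally strictly cyclic for A. -/
import Mathlib


/-- `h₀` is a rationally strictly cyclic vector for the algebra `A`: for every `h` there
are `A₁, B ∈ A` with `B h = A₁ h₀` and `ker B = {0}`. -/
def RatStrictCyclic {H : Type*} [NormedAddCommGroup H] [InnerProductSpace ℂ H]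
    (A : Subalgebra ℂ (H →L[ℂ] H)) (h₀ : H) : Prop :=
  ∀ h : H, ∃ A₁ ∈ A, ∃ B ∈ A, Function.Injective B ∧ B h = A₁ h₀

/-- An algebra of operators is confluent if any two nonzero vectors can be matched by
injective operators from the algebra. -/
def ConfluentOn {H : Type*} [NormedAddCommGroup H] [InnerProductSpace ℂ H]
    (A : Set (H →L[ℂ] H)) : Prop :=
  ∀ h₁ h₂ : H, h₁ ≠ 0 → h₂ ≠ 0 →
    ∃ B₁ ∈ A, ∃ B₂ ∈ A, Function.Injective B₁ ∧ Function.Injective B₂ ∧ B₁ h₁ = B₂ h₂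

/-- For a commutative unital algebra A of bounded operators the following
are equivalent: (1) A has a rationally strictly cyclic vector and every nonzero member
of A is injective; (2) A is confluent. Moreover in that case every nonzero vector is
rationally strictly cyclic for A. -/
theorem stmt10 {H : Type*} [NormedAddCommGroup H] [InnerProductSpace ℂ H] [CompleteSpace H]
    (A : Subalgebra ℂ (H →L[ℂ] H))
    (hcomm : ∀ T₁ ∈ A, ∀ T₂ ∈ A, T₁ * T₂ = T₂ * T₁) :
    (((∃ h₀ : H, RatStrictCyclic A h₀) ∧
        ∀ B ∈ A, B ≠ 0 → Function.Injective B) ↔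
      ConfluentOn (A : Set (H →L[ℂ] H))) ∧
    (ConfluentOn (A : Set (H →L[ℂ] H)) →
      ∀ h₀ : H, h₀ ≠ 0 → RatStrictCyclic A h₀) := by
  -- First: confluence implies every nonzero vector is rationally strictly cyclic.
  have key : ConfluentOn (A : Set (H →L[ℂ] H)) →
      ∀ h₀ : H, h₀ ≠ 0 → RatStrictCyclic A h₀ := by
    intro hconf h₀ hh₀ h
    by_cases hh : h = 0
    · refine ⟨0, zero_mem A, 1, one_mem A, ?_, ?_⟩
      · intro a b hab; simpa using hab
      · simp [hh]
    · obtain ⟨B₁, hB₁, B₂, hB₂, hi₁, hi₂, heq⟩ := hconf h h₀ hh hh₀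
      exact ⟨B₂, hB₂, B₁, hB₁, hi₁, heq⟩
  -- Second: confluence implies every nonzero member of A is injective.
  have inj : ConfluentOn (A : Set (H →L[ℂ] H)) →
      ∀ B ∈ A, B ≠ 0 → Function.Injective B := by
    intro hconf B hBA hB0
    by_contra hni
    -- get h ≠ 0 with B h = 0
    rw [Function.not_injective_iff] at hni
    obtain ⟨a, b, hab, hne⟩ := hni
    set h := a - b with hdef
    have hh : h ≠ 0 := sub_ne_zero.mpr hne
    have hBh : B h = 0 := by simp [hdef, map_sub, hab]
    -- get k with B k ≠ 0
    have : ∃ k : H, B k ≠ 0 := by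
      by_contra hc
      push_neg at hc
      exact hB0 (ContinuousLinearMap.ext fun x => by simp [hc x])
    obtain ⟨k, hk⟩ := this
    have hkne : k ≠ 0 := fun h' => hk (by simp [h'])
    obtain ⟨B₁, hB₁, B₂, hB₂, hi₁, hi₂, heq⟩ := hconf h k hh hkne
    have comm1 : B * B₁ = B₁ * B := hcomm B hBA B₁ hB₁
    have comm2 : B * B₂ = B₂ * B := hcomm B hBA B₂ hB₂
    have : B₂ (B k) = 0 := by
      have e1 : B (B₁ h) = B₁ (B h) := by
        have := ContinuousLinearMap.ext_iff.mp comm1 h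
        simpa using this
      have e2 : B (B₂ k) = B₂ (B k) := by
        have := ContinuousLinearMap.ext_iff.mp comm2 k
        simpa using this
      rw [← e2, ← heq, e1, hBh, map_zero]
    have : B k = 0 := hi₂ (by simpa using this)
    exact hk this
  constructor
  · constructor
    · rintro ⟨⟨h₀, hcyc⟩, hinj⟩ h₁ h₂ hh₁ hh₂
      obtain ⟨A₁, hA₁, B₁, hB₁, hiB₁, he₁⟩ := hcyc h₁
      obtain ⟨A₂, hA₂, B₂, hB₂, hiB₂, he₂⟩ := hcyc h₂
      have hB₁h₁ : B₁ h₁ ≠ 0 := fun hc => hh₁ (hiB₁ (by simpa using hc))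
      have hB₂h₂ : B₂ h₂ ≠ 0 := fun hc => hh₂ (hiB₂ (by simpa using hc))
      have hA₁0 : A₁ ≠ 0 := by
        rintro rfl; rw [he₁] at hB₁h₁; simp at hB₁h₁
      have hA₂0 : A₂ ≠ 0 := by
        rintro rfl; rw [he₂] at hB₂h₂; simp at hB₂h₂
      have hiA₁ : Function.Injective A₁ := hinj A₁ hA₁ hA₁0
      have hiA₂ : Function.Injective A₂ := hinj A₂ hA₂ hA₂0
      refine ⟨A₂ * B₁, mul_mem hA₂ hB₁, A₁ * B₂, mul_mem hA₁ hB₂, ?_, ?_, ?_⟩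
      · exact hiA₂.comp hiB₁
      · exact hiA₁.comp hiB₂
      · have comm : A₂ * A₁ = A₁ * A₂ := hcomm A₂ hA₂ A₁ hA₁
        have : A₂ (A₁ h₀) = A₁ (A₂ h₀) := by
          have := ContinuousLinearMap.ext_iff.mp comm h₀
          simpa using this
        simp only [ContinuousLinearMap.mul_apply]
        rw [he₁, he₂, this]
    · intro hconf
      refine ⟨?_, inj hconf⟩
      by_cases hH : ∃ x : H, x ≠ 0
      · obtain ⟨x, hx⟩ := hH
        exact ⟨x, key hconf x hx⟩
      · push_neg at hH
        refine ⟨0, fun h => ⟨0, zero_mem A, 1, one_mem A, ?_, ?_⟩⟩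
        · intro a b hab; simpa using hab
        · simp [hH h]
  · exact key
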